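/- Let F : ℝ^n → [0,∞) be measurable. Then ‖F‖_BLO² ≤ ‖F²‖_BLO, i.e., if F² ∈ BLO(ℝ^n) with constant C, then F ∈ BLO(ℝ^n) with constant at most √C. -/

import Mathlib

open MeasureTheory Metric

abbrev E (n : ℕ) := EuclideanSpace ℝ (Fin n)

/-!
On a ball, write `m` and `m₂` for the essential infima of `F` and `F²`. Since `F ≥ m ≥ 0` a.e.
and `m₂ ≤ m²`, pointwise `(F - m)² ≤ F² - m₂` a.e., so by Jensen
`(⨍ (F - m))² ≤ ⨍ (F - m)² ≤ ⨍ (F² - m₂) ≤ C`.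
-/

open Filter

section EssInf

variable {α : Type*} [MeasurableSpace α] {μ : Measure α} [NeZero μ]

/-- A real function cannot tend to `+∞` along `ae μ` when `μ ≠ 0`. -/
lemma isCoboundedUnder_ge_ae_real (f : α → ℝ) : IsCoboundedUnder (· ≥ ·) (ae μ) f := by
  obtain ⟨n, hn⟩ : ∃ n : ℕ, ∃ᶠ x in ae μ, f x ≤ n := by
    by_contra! h
    obtain ⟨x, hx⟩ := (ae_all_iff.2 h).exists
    obtain ⟨n, hn⟩ := exists_nat_ge (f x)
    exact (hx n).not_ge hn
  exact IsCobounded.of_frequently_le (l := (n : ℝ)) (by rwa [frequently_map])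

lemma essInf_nonneg_real {f : α → ℝ} (hf : 0 ≤ᵐ[μ] f) : 0 ≤ essInf f μ :=
  le_essInf_of_ae_le 0 hf (isCoboundedUnder_ge_ae_real f)

lemma essInf_sq_le_sq_essInf {f : α → ℝ} (hf : 0 ≤ᵐ[μ] f) :
    essInf (fun x => f x ^ 2) μ ≤ essInf f μ ^ 2 := by
  set m₂ := essInf (fun x => f x ^ 2) μ
  have hm₂ : 0 ≤ m₂ := essInf_nonneg_real (ae_of_all _ fun x => sq_nonneg (f x))
  have hsqrt : √m₂ ≤ essInf f μ := by
    refine le_essInf_of_ae_le _ ?_ (isCoboundedUnder_ge_ae_real f)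
    filter_upwards [ae_essInf_le (f := fun x => f x ^ 2) ⟨0, eventually_map.2
      (ae_of_all _ fun x => sq_nonneg (f x))⟩, hf] with x hx hx₀
    calc √m₂ ≤ √(f x ^ 2) := Real.sqrt_le_sqrt hx
      _ = f x := Real.sqrt_sq hx₀
  calc m₂ = √m₂ ^ 2 := (Real.sq_sqrt hm₂).symm
    _ ≤ essInf f μ ^ 2 := pow_le_pow_left₀ (Real.sqrt_nonneg _) hsqrt 2

theorem sq_average_sub_essInf_le [IsFiniteMeasure μ] {f : α → ℝ} (hf : 0 ≤ᵐ[μ] f)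
    (hf₂ : Integrable (fun x => f x ^ 2) μ) :
    (⨍ x, (f x - essInf f μ) ∂μ) ^ 2 ≤ ⨍ x, (f x ^ 2 - essInf (fun y => f y ^ 2) μ) ∂μ := by
  set m := essInf f μ
  have hmeas : AEStronglyMeasurable f μ :=
    (Real.continuous_sqrt.comp_aestronglyMeasurable hf₂.1).congr <| by
      filter_upwards [hf] with x hx using Real.sqrt_sq hx
  have hfi : Integrable f μ := ((memLp_two_iff_integrable_sq hmeas).2 hf₂).integrable one_le_two
  have hsq : Integrable (fun x => (f x - m) ^ 2) μ := by
    refine ((hf₂.sub ((hfi.const_mul 2).mul_const m)).add (integrable_const (m ^ 2))).congr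
      (ae_of_all _ fun x => ?_)
    simp only [Pi.add_apply, Pi.sub_apply]
    ring
  have jensen : (⨍ x, (f x - m) ∂μ) ^ 2 ≤ ⨍ x, (f x - m) ^ 2 ∂μ := by
    simpa using (even_two.convexOn_pow (𝕜 := ℝ)).map_average_le
      (continuous_pow 2).continuousOn isClosed_univ (ae_of_all _ fun _ => Set.mem_univ _)
      (hfi.sub (integrable_const m)) hsq
  have pointwise : ∀ᵐ x ∂μ, (f x - m) ^ 2 ≤ f x ^ 2 - essInf (fun y => f y ^ 2) μ := by
    have hm : 0 ≤ m := essInf_nonneg_real hf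
    have hm₂ := essInf_sq_le_sq_essInf hf
    filter_upwards [ae_essInf_le (f := f) ⟨0, eventually_map.2 hf⟩] with x hx
    nlinarith
  refine jensen.trans ?_
  rw [average_eq, average_eq]
  exact smul_le_smul_of_nonneg_left
    (integral_mono_ae hsq (hf₂.sub (integrable_const _)) pointwise) (by positivity)

end EssInf

theorem stmt_3_general (n : ℕ) (F : E n → ℝ) (hpos : ∀ x, 0 ≤ F x)
    (C : ℝ)
    (hloc : MeasureTheory.LocallyIntegrable (fun x => F x ^ 2) volume)
    (hBLO : ∀ (x₀ : E n) (r : ℝ), 0 < r →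
      ⨍ x in ball x₀ r,
        (F x ^ 2 - essInf (fun y => F y ^ 2) (volume.restrict (ball x₀ r))) ≤ C) :
    ∀ (x₀ : E n) (r : ℝ), 0 < r →
      ⨍ x in ball x₀ r, (F x - essInf F (volume.restrict (ball x₀ r))) ≤ Real.sqrt C := by
  intro x₀ r hr
  have : IsFiniteMeasure (volume.restrict (ball x₀ r)) :=
    isFiniteMeasure_restrict.2 measure_ball_lt_top.ne
  have : NeZero (volume.restrict (ball x₀ r)) :=
    ⟨mt Measure.restrict_eq_zero.1 (measure_ball_pos volume x₀ hr).ne'⟩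
  have hF₂ : IntegrableOn (fun x => F x ^ 2) (ball x₀ r) :=
    (hloc.integrableOn_isCompact (isCompact_closedBall x₀ r)).mono_set ball_subset_closedBall
  exact (le_abs_self _).trans <| Real.abs_le_sqrt <|
    (sq_average_sub_essInf_le (ae_of_all _ hpos) hF₂).trans (hBLO x₀ r hr)

/-- `‖F‖_BLO² ≤ ‖F²‖_BLO`: if `F² ∈ BLO(ℝⁿ)` with constant `C`, then
`F ∈ BLO(ℝⁿ)` with constant at most `√C`. -/
theorem stmt_3 (n : ℕ) (F : E n → ℝ) (hF : Measurable F) (hpos : ∀ x, 0 ≤ F x)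
    (C : ℝ) (hC : 0 ≤ C)
    (hloc : MeasureTheory.LocallyIntegrable (fun x => F x ^ 2) volume)
    (hBLO : ∀ (x₀ : E n) (r : ℝ), 0 < r →
      ⨍ x in ball x₀ r,
        (F x ^ 2 - essInf (fun y => F y ^ 2) (volume.restrict (ball x₀ r))) ≤ C) :
    ∀ (x₀ : E n) (r : ℝ), 0 < r →
      ⨍ x in ball x₀ r, (F x - essInf F (volume.restrict (ball x₀ r))) ≤ Real.sqrt C :=
  stmt_3_general n F hpos C hloc hBLO
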